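/- Let a, b, c be real numbers and r > 0. Define f₀ = r³ + ar² + br + c, f₁ = 3r³ + ar² − br − 3c, f₂ = 3r³ − ar² − br + 3c, f₃ = r³ − ar² + br − c. Then every complex root of z³ + az² + bz + c has modulus strictly less than r if and only if f₀ > 0, f₁ > 0, f₂ > 0, f₃ > 0, and f₁f₂ − f₀f₃ > 0. -/

import Mathlib

/-!
A real cubic has a real root `x`, so `z³ + az² + bz + c = (z - x)(z² + pz + q)` with `p, q` real.
Its roots lie in the open disk of radius `r` iff `|x| < r` and `r² + pr + q > 0`,
`r² - pr + q > 0`, `q < r²` (for real roots `s, w` of the quadratic the first two are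
`(r ∓ s)(r ∓ w) > 0`; for a conjugate pair `|z|² = q`). With `u = r - x`, `v = r + x`,
`A = r² + pr + q`, `B = r² - pr + q`, `D = 2(r² - q)`, the `fᵢ` are the coefficients of the
bilinear transform `(us + v)(As² + Ds + B)` of this factorization, and since
`f₁f₂ - f₀f₃ = D(u f₂ + v²A)`, the Hurwitz conditions on the `fᵢ` hold exactly when
`u, v, A, B, D > 0`.
-/

open Polynomial Filter

theorem Polynomial.Monic.exists_isRoot_of_odd_natDegree {P : ℝ[X]} (hP : P.Monic)
    (hodd : Odd P.natDegree) : ∃ x, P.IsRoot x := by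
  have hdeg : 0 < P.degree := natDegree_pos_iff_degree_pos.mp hodd.pos
  have hlead : Tendsto (fun x => P.leadingCoeff * x ^ P.natDegree) atBot atBot := by
    have := (tendsto_neg_atTop_atBot (G := ℝ)).comp
      ((tendsto_pow_atTop hodd.pos.ne').comp tendsto_neg_atBot_atTop)
    simpa [Function.comp_def, hP.leadingCoeff, hodd.neg_pow] using this
  exact P.continuous.surjective
    (P.tendsto_atTop_of_leadingCoeff_nonneg hdeg (by simp [hP.leadingCoeff]))
    ((isEquivalent_atBot_lead P).symm.tendsto_atBot hlead) 0

theorem Real.exists_cubic_eq_zero (a b c : ℝ) : ∃ x : ℝ, x ^ 3 + a * x ^ 2 + b * x + c = 0 := by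
  have hmonic : (X ^ 3 + C a * X ^ 2 + C b * X + C c).Monic := by monicity!
  have hdeg : (X ^ 3 + C a * X ^ 2 + C b * X + C c).natDegree = 3 := by compute_degree!
  obtain ⟨x, hx⟩ := hmonic.exists_isRoot_of_odd_natDegree (by rw [hdeg]; decide)
  exact ⟨x, by simpa using hx⟩

theorem Complex.exists_quadratic_eq_zero (p q : ℂ) : ∃ z : ℂ, z ^ 2 + p * z + q = 0 := by
  obtain ⟨z, hz⟩ := _root_.exists_quadratic_eq_zero one_ne_zero
    (IsAlgClosed.exists_eq_mul_self (discrim 1 p q))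
  exact ⟨z, by linear_combination hz⟩

theorem cubic_eq_mul_quadratic {K : Type*} [CommRing K] {a b c x : K}
    (hx : x ^ 3 + a * x ^ 2 + b * x + c = 0) (z : K) :
    z ^ 3 + a * z ^ 2 + b * z + c = (z - x) * (z ^ 2 + (a + x) * z + (b + x * (a + x))) := by
  linear_combination hx

theorem forall_norm_lt_of_eq_mul_iff {f g : ℂ → ℂ} {x : ℂ} {r : ℝ}
    (hfg : ∀ z, f z = (z - x) * g z) :
    (∀ z, f z = 0 → ‖z‖ < r) ↔ ‖x‖ < r ∧ ∀ z, g z = 0 → ‖z‖ < r := by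
  simp only [hfg, mul_eq_zero, sub_eq_zero, or_imp, forall_and, forall_eq]

theorem abs_lt_and_abs_lt_iff {r s w : ℝ} (hr : 0 < r) :
    |s| < r ∧ |w| < r ↔ 0 < (r - s) * (r - w) ∧ 0 < (r + s) * (r + w) ∧ s * w < r ^ 2 := by
  simp only [abs_lt]
  constructor
  · rintro ⟨⟨hs₁, hs₂⟩, hw₁, hw₂⟩
    exact ⟨by nlinarith, by nlinarith, by nlinarith⟩
  · rintro ⟨h₁, h₂, h₃⟩
    have hlt : s + w < 2 * r := by nlinarith
    have hgt : -(2 * r) < s + w := by nlinarith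
    refine ⟨⟨?_, ?_⟩, ?_, ?_⟩
    · by_contra! h
      nlinarith [mul_nonneg (by linarith : (0 : ℝ) ≤ -(r + s)) (by linarith : (0 : ℝ) ≤ r + w)]
    · by_contra! h
      nlinarith [mul_nonneg (sub_nonneg.mpr h) (by linarith : (0 : ℝ) ≤ r - w)]
    · by_contra! h
      nlinarith [mul_nonneg (by linarith : (0 : ℝ) ≤ -(r + w)) (by linarith : (0 : ℝ) ≤ r + s)]
    · by_contra! h
      nlinarith [mul_nonneg (sub_nonneg.mpr h) (by linarith : (0 : ℝ) ≤ r - s)]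

theorem Complex.normSq_eq_of_quadratic_eq_zero {p q : ℝ} {z : ℂ} (hd : p ^ 2 - 4 * q < 0)
    (hz : z ^ 2 + p * z + q = 0) : normSq z = q := by
  have hre : z.re ^ 2 - z.im ^ 2 + p * z.re + q = 0 := by
    simpa [sq] using congrArg re hz
  have him : z.im * (2 * z.re + p) = 0 := by
    have := congrArg im hz
    simp only [sq, add_im, mul_im, ofReal_re, ofReal_im, zero_mul, add_zero, zero_im] at this
    linear_combination this
  have hz_im : z.im ≠ 0 := by
    intro h
    nlinarith [sq_nonneg (2 * z.re + p)]
  have hz_re : 2 * z.re + p = 0 := (mul_eq_zero.mp him).resolve_left hz_im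
  rw [normSq_apply]
  linear_combination -hre + z.re * hz_re

theorem quadratic_roots_norm_lt_iff {p q r : ℝ} (hr : 0 < r) :
    (∀ z : ℂ, z ^ 2 + p * z + q = 0 → ‖z‖ < r) ↔
      0 < r ^ 2 + p * r + q ∧ 0 < r ^ 2 - p * r + q ∧ q < r ^ 2 := by
  rcases le_or_gt 0 (p ^ 2 - 4 * q) with hd | hd
  · obtain ⟨s, w, rfl, rfl⟩ : ∃ s w : ℝ, p = -(s + w) ∧ q = s * w :=
      ⟨(-p + √(p ^ 2 - 4 * q)) / 2, (-p - √(p ^ 2 - 4 * q)) / 2, by ring,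
        by linear_combination Real.sq_sqrt hd / 4⟩
    have hfac : ∀ z : ℂ, z ^ 2 + ↑(-(s + w)) * z + ↑(s * w) = (z - s) * (z - w) := fun z => by
      push_cast; ring
    rw [forall_norm_lt_of_eq_mul_iff hfac]
    simp only [sub_eq_zero, forall_eq, Complex.norm_real, Real.norm_eq_abs]
    refine (abs_lt_and_abs_lt_iff hr).trans ?_
    ring_nf
  · have hnorm : ∀ z : ℂ, z ^ 2 + p * z + q = 0 → ‖z‖ ^ 2 = q := fun z hz => by
      rw [Complex.sq_norm, Complex.normSq_eq_of_quadratic_eq_zero hd hz]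
    obtain ⟨z₀, hz₀⟩ := Complex.exists_quadratic_eq_zero p q
    have hA : 0 < r ^ 2 + p * r + q := by nlinarith [sq_nonneg (2 * r + p)]
    have hB : 0 < r ^ 2 - p * r + q := by nlinarith [sq_nonneg (2 * r - p)]
    simp only [hA, hB, true_and]
    constructor
    · intro h
      rw [← hnorm z₀ hz₀, sq_lt_sq₀ (norm_nonneg _) hr.le]
      exact h z₀ hz₀
    · intro hq z hz
      rwa [← sq_lt_sq₀ (norm_nonneg _) hr.le, hnorm z hz]

theorem linear_mul_quadratic_hurwitz_iff {u v A D B : ℝ} (huv : 0 < u + v) :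
    (0 < u ∧ 0 < v ∧ 0 < A ∧ 0 < D ∧ 0 < B) ↔
      (0 < u * A ∧ 0 < u * D + v * A ∧ 0 < u * B + v * D ∧ 0 < v * B ∧
        0 < (u * D + v * A) * (u * B + v * D) - u * A * (v * B)) := by
  have hΔ : (u * D + v * A) * (u * B + v * D) - u * A * (v * B)
      = D * (u * (u * B + v * D) + v ^ 2 * A) := by ring
  constructor
  · rintro ⟨hu, hv, hA, hD, hB⟩
    refine ⟨by positivity, by positivity, by positivity, by positivity, ?_⟩
    rw [hΔ]
    positivity
  · rintro ⟨h₀, h₁, h₂, h₃, h₄⟩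
    -- a wrong sign of `u` (or `v`) forces opposite signs of `D` through `f₁` and `f₂`
    have hu : 0 < u := by
      by_contra! hu
      have hv : 0 < v := by linarith
      have hA : A < 0 := by nlinarith
      have hB : 0 < B := by nlinarith
      have hD : 0 < D := by nlinarith
      nlinarith
    have hv : 0 < v := by
      by_contra! hv
      have hB : B < 0 := by nlinarith
      have hA : 0 < A := by nlinarith
      have hD : 0 < D := by nlinarith
      nlinarith
    have hA : 0 < A := pos_of_mul_pos_right h₀ hu.le
    have hB : 0 < B := pos_of_mul_pos_right h₃ hv.le
    have hD : 0 < D := pos_of_mul_pos_left (hΔ ▸ h₄) (by positivity)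
    exact ⟨hu, hv, hA, hD, hB⟩

/-- radius-r Routh–Hurwitz criterion for a real monic cubic:
all complex roots of z³ + az² + bz + c lie in the open disk of radius r iff
f₀ > 0, f₁ > 0, f₂ > 0, f₃ > 0 and f₁f₂ − f₀f₃ > 0, where the fᵢ come from the
bilinear substitution z = r(s+1)/(s−1). -/
theorem stmt_18 (a b c r : ℝ) (hr : 0 < r) :
    (∀ z : ℂ, z ^ 3 + (a : ℂ) * z ^ 2 + (b : ℂ) * z + (c : ℂ) = 0 →
        ‖z‖ < r) ↔
      (r ^ 3 + a * r ^ 2 + b * r + c > 0 ∧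
       3 * r ^ 3 + a * r ^ 2 - b * r - 3 * c > 0 ∧
       3 * r ^ 3 - a * r ^ 2 - b * r + 3 * c > 0 ∧
       r ^ 3 - a * r ^ 2 + b * r - c > 0 ∧
       (3 * r ^ 3 + a * r ^ 2 - b * r - 3 * c) * (3 * r ^ 3 - a * r ^ 2 - b * r + 3 * c)
         - (r ^ 3 + a * r ^ 2 + b * r + c) * (r ^ 3 - a * r ^ 2 + b * r - c) > 0) := by
  obtain ⟨x, hx⟩ := Real.exists_cubic_eq_zero a b c
  have hfac := cubic_eq_mul_quadratic (a := (a : ℂ)) (b := b) (c := c) (x := x)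
    (by exact_mod_cast congrArg Complex.ofReal hx)
  have hquad := quadratic_roots_norm_lt_iff (p := a + x) (q := b + x * (a + x)) hr
  push_cast at hquad
  rw [forall_norm_lt_of_eq_mul_iff hfac, Complex.norm_real, Real.norm_eq_abs, hquad, abs_lt]
  set A := r ^ 2 + (a + x) * r + (b + x * (a + x))
  set B := r ^ 2 - (a + x) * r + (b + x * (a + x))
  set D := 2 * (r ^ 2 - (b + x * (a + x)))
  have e₀ : r ^ 3 + a * r ^ 2 + b * r + c = (r - x) * A := by linear_combination hx
  have e₁ : 3 * r ^ 3 + a * r ^ 2 - b * r - 3 * c = (r - x) * D + (r + x) * A := by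
    linear_combination -3 * hx
  have e₂ : 3 * r ^ 3 - a * r ^ 2 - b * r + 3 * c = (r - x) * B + (r + x) * D := by
    linear_combination 3 * hx
  have e₃ : r ^ 3 - a * r ^ 2 + b * r - c = (r + x) * B := by linear_combination -hx
  rw [e₀, e₁, e₂, e₃]
  refine Iff.trans ?_ (linear_mul_quadratic_hurwitz_iff (by linarith : 0 < r - x + (r + x)))
  simp only [D, sub_pos, neg_lt_iff_pos_add', Nat.ofNat_pos, mul_pos_iff_of_pos_left]
  tauto
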